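/- Let K(t,u) = 1 + (1/2)·(4(t−1/2)(u−1/2))^{1/7} for t,u ∈ [0,1], and let f₂(t) = (1/2)(√(57/17) + √(33/119)·(2(t−1/2))^{1/7}). Then ∫₀¹ K(t,u)·f₂(u)³ du = f₂(t) for all t ∈ [0,1]. -/

import Mathlib

noncomputable def oddRoot (n : ℕ) (x : ℝ) : ℝ :=
  if 0 ≤ x then x ^ ((1 : ℝ) / n) else -((-x) ^ ((1 : ℝ) / n))

noncomputable def f₂ (t : ℝ) : ℝ :=
  (1/2) * (Real.sqrt (57/17) + Real.sqrt (33/119) * oddRoot 7 (2 * (t - 1/2)))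

/-! With `g u = oddRoot 7 (2u - 1)` the kernel factors as `1 + g t * g u / 2` and
`f₂ = a + b g`, so the integrand is a quartic polynomial in `g u`. Substituting `x = 2u - 1`, the
moments of `g` on `[0, 1]` are the averages of the powers of `x^{1/7}` over `[-1, 1]`: the odd
ones vanish and the even ones are `7/(k+7)`. The integral is then `a³ + (7/3)ab² + g t · (7b/2)(a²/3 + b²/11)`, and
for `a = √(57/17)/2`, `b = √(33/119)/2` the two coefficients are exactly `a` and `b`. -/

open Set intervalIntegral

section oddRoot

variable {n : ℕ}

theorem oddRoot_of_nonneg {x : ℝ} (hx : 0 ≤ x) : oddRoot n x = x ^ ((1 : ℝ) / n) := if_pos hx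

theorem oddRoot_of_neg {x : ℝ} (hx : x < 0) : oddRoot n x = -((-x) ^ ((1 : ℝ) / n)) :=
  if_neg hx.not_ge

theorem oddRoot_zero (hn : n ≠ 0) : oddRoot n 0 = 0 := by
  rw [oddRoot_of_nonneg le_rfl, Real.zero_rpow (by positivity)]

theorem oddRoot_neg (hn : n ≠ 0) (x : ℝ) : oddRoot n (-x) = -oddRoot n x := by
  rcases lt_trichotomy x 0 with hx | rfl | hx
  · rw [oddRoot_of_nonneg (by linarith), oddRoot_of_neg hx, neg_neg]
  · rw [neg_zero, oddRoot_zero hn, neg_zero]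
  · rw [oddRoot_of_neg (neg_neg_of_pos hx), oddRoot_of_nonneg hx.le, neg_neg]

theorem oddRoot_mul (hn : n ≠ 0) (x y : ℝ) : oddRoot n (x * y) = oddRoot n x * oddRoot n y := by
  have hnonneg : ∀ {x y : ℝ}, 0 ≤ x → 0 ≤ y → oddRoot n (x * y) = oddRoot n x * oddRoot n y :=
    fun hx hy ↦ by
      rw [oddRoot_of_nonneg (mul_nonneg hx hy), oddRoot_of_nonneg hx, oddRoot_of_nonneg hy,
        Real.mul_rpow hx hy]
  rcases le_or_gt 0 x with hx | hx <;> rcases le_or_gt 0 y with hy | hy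
  · exact hnonneg hx hy
  · rw [← neg_neg y, mul_neg, oddRoot_neg hn, oddRoot_neg hn, hnonneg hx (by linarith), mul_neg]
  · rw [← neg_neg x, neg_mul, oddRoot_neg hn, oddRoot_neg hn, hnonneg (by linarith) hy, neg_mul]
  · rw [← neg_mul_neg, hnonneg (by linarith) (by linarith), oddRoot_neg hn, oddRoot_neg hn,
      neg_mul_neg]

theorem continuous_oddRoot (hn : n ≠ 0) : Continuous (oddRoot n) := by
  have hpow : Continuous fun x : ℝ => x ^ ((1 : ℝ) / n) :=
    Real.continuous_rpow_const (by positivity)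
  refine Continuous.if_le hpow (hpow.comp continuous_neg).neg continuous_const continuous_id ?_
  rintro x rfl
  simp only [neg_zero, Real.zero_rpow (show (1 : ℝ) / n ≠ 0 by positivity)]

theorem integral_oddRoot_pow_zero_one (hn : n ≠ 0) (k : ℕ) :
    ∫ x in (0 : ℝ)..1, oddRoot n x ^ k = n / (k + n) := by
  have hpow : EqOn (fun x ↦ oddRoot n x ^ k) (fun x ↦ x ^ ((k : ℝ) / n)) (uIcc 0 1) := by
    intro x hx
    rw [uIcc_of_le zero_le_one] at hx
    dsimp only
    rw [oddRoot_of_nonneg hx.1, ← Real.rpow_natCast, ← Real.rpow_mul hx.1, one_div_mul_eq_div]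
  rw [integral_congr hpow, integral_rpow (Or.inl (neg_one_lt_zero.trans_le (by positivity))),
    Real.one_rpow, Real.zero_rpow (by positivity)]
  field_simp
  ring

theorem integral_oddRoot_pow_neg_one_one (hn : n ≠ 0) (k : ℕ) :
    ∫ x in (-1 : ℝ)..1, oddRoot n x ^ k = if Even k then (2 * n / (k + n) : ℝ) else 0 := by
  have hint : ∀ a b : ℝ, IntervalIntegrable (fun x ↦ oddRoot n x ^ k) MeasureTheory.volume a b :=
    fun a b ↦ ((continuous_oddRoot hn).pow k).intervalIntegrable a b
  have hreflect :
      ∫ x in (-1 : ℝ)..0, oddRoot n x ^ k = (-1) ^ k * ∫ x in (0 : ℝ)..1, oddRoot n x ^ k := by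
    simpa [oddRoot_neg hn, neg_pow (oddRoot n _), integral_const_mul] using
      (integral_comp_neg (a := 0) (b := 1) fun x ↦ oddRoot n x ^ k).symm
  rw [← integral_add_adjacent_intervals (hint (-1) 0) (hint 0 1), hreflect,
    integral_oddRoot_pow_zero_one hn]
  rcases k.even_or_odd with hk | hk
  · rw [hk.neg_one_pow, if_pos hk]; ring
  · rw [hk.neg_one_pow, if_neg (Nat.not_even_iff_odd.2 hk)]; ring

theorem integral_oddRoot_two_mul_sub_half_pow (hn : n ≠ 0) (k : ℕ) :
    ∫ u in (0 : ℝ)..1, oddRoot n (2 * (u - 1 / 2)) ^ k =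
      if Even k then (n / (k + n) : ℝ) else 0 := by
  simp_rw [show ∀ u : ℝ, 2 * (u - 1 / 2) = 2 * u - 1 from fun u ↦ by ring]
  rw [integral_comp_mul_sub (fun x ↦ oddRoot n x ^ k) two_ne_zero]
  norm_num [integral_oddRoot_pow_neg_one_one hn]
  split_ifs <;> ring

end oddRoot

theorem integral_sum_const_mul_pow {m : ℕ} {g : ℝ → ℝ} (hg : Continuous g) (c : Fin m → ℝ)
    (a b : ℝ) :
    ∫ u in a..b, ∑ k, c k * g u ^ (k : ℕ) = ∑ k, c k * ∫ u in a..b, g u ^ (k : ℕ) := by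
  rw [integral_finsetSum (f := fun k u ↦ c k * g u ^ (k : ℕ))
    fun k _ ↦ (continuous_const.mul (hg.pow k)).intervalIntegrable a b]
  simp only [integral_const_mul]

theorem integral_one_add_mul_mul_add_mul_pow_three {g : ℝ → ℝ} (hg : Continuous g) (s a b : ℝ) :
    ∫ u in (0 : ℝ)..1, (1 + s * g u / 2) * (a + b * g u) ^ 3 =
      a ^ 3 + (3 * a ^ 2 * b + s * a ^ 3 / 2) * (∫ u in (0 : ℝ)..1, g u ^ 1)
        + (3 * a * b ^ 2 + 3 * s * a ^ 2 * b / 2) * (∫ u in (0 : ℝ)..1, g u ^ 2)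
        + (b ^ 3 + 3 * s * a * b ^ 2 / 2) * (∫ u in (0 : ℝ)..1, g u ^ 3)
        + s * b ^ 3 / 2 * ∫ u in (0 : ℝ)..1, g u ^ 4 := by
  have hexpand (u : ℝ) : (1 + s * g u / 2) * (a + b * g u) ^ 3 =
      ∑ k : Fin 5, ![a ^ 3, 3 * a ^ 2 * b + s * a ^ 3 / 2, 3 * a * b ^ 2 + 3 * s * a ^ 2 * b / 2,
        b ^ 3 + 3 * s * a * b ^ 2 / 2, s * b ^ 3 / 2] k * g u ^ (k : ℕ) := by
    simp only [Fin.sum_univ_succ, Fin.sum_univ_zero, Matrix.cons_val_zero, Matrix.cons_val_succ,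
      Fin.val_zero, Fin.val_succ]
    ring
  rw [integral_congr fun u _ ↦ hexpand u, integral_sum_const_mul_pow hg]
  simp only [Fin.sum_univ_succ, Fin.sum_univ_zero, Matrix.cons_val_zero, Matrix.cons_val_succ,
    Fin.val_zero, Fin.val_succ, Nat.reduceAdd, pow_zero, integral_const, sub_zero, smul_eq_mul,
    mul_one, zero_add, add_zero]
  ring

theorem stmt6_general (t : ℝ) :
    ∫ u in (0:ℝ)..1,
      (1 + (1/2) * oddRoot 7 (4 * (t - 1/2) * (u - 1/2))) * (f₂ u)^3 = f₂ t := by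
  set g : ℝ → ℝ := fun u ↦ oddRoot 7 (2 * (u - 1 / 2))
  set a := √(57 / 17) / 2
  set b := √(33 / 119) / 2
  have hf (u : ℝ) : f₂ u = a + b * g u := by
    show 1 / 2 * _ = _
    ring
  have hintegrand (u : ℝ) : (1 + 1 / 2 * oddRoot 7 (4 * (t - 1 / 2) * (u - 1 / 2))) * f₂ u ^ 3 =
      (1 + g t * g u / 2) * (a + b * g u) ^ 3 := by
    rw [hf, show 4 * (t - 1 / 2) * (u - 1 / 2) = 2 * (t - 1 / 2) * (2 * (u - 1 / 2)) by ring,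
      oddRoot_mul (by norm_num)]
    ring
  have hgc : Continuous g :=
    (continuous_oddRoot (by norm_num)).comp (by fun_prop : Continuous fun u : ℝ ↦ 2 * (u - 1 / 2))
  have hmoment (k : ℕ) : ∫ u in (0 : ℝ)..1, g u ^ k = if Even k then (7 / (k + 7) : ℝ) else 0 := by
    exact_mod_cast integral_oddRoot_two_mul_sub_half_pow (n := 7) (by norm_num) k
  have ha2 : a ^ 2 = 57 / 68 := by rw [div_pow, Real.sq_sqrt (by norm_num)]; norm_num
  have hb2 : b ^ 2 = 33 / 476 := by rw [div_pow, Real.sq_sqrt (by norm_num)]; norm_num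
  have hconst : a ^ 3 + 7 / 3 * a * b ^ 2 = a := by linear_combination a * ha2 + 7 / 3 * a * hb2
  have hlin : 7 * b / 2 * (a ^ 2 / 3 + b ^ 2 / 11) = b := by
    linear_combination 7 * b / 6 * ha2 + 7 * b / 22 * hb2
  rw [integral_congr fun u _ ↦ hintegrand u, integral_one_add_mul_mul_add_mul_pow_three hgc,
    hmoment, hmoment, hmoment, hmoment, hf t]
  norm_num
  linear_combination hconst + g t * hlin

theorem stmt6 (t : ℝ) (ht : t ∈ Set.Icc (0:ℝ) 1) :
    ∫ u in (0:ℝ)..1,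
      (1 + (1/2) * oddRoot 7 (4 * (t - 1/2) * (u - 1/2))) * (f₂ u)^3 = f₂ t :=
  stmt6_general t
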